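/- Let G be a graph, k a non-negative integer, and H a connected component of G that is a clique with at least k+2 vertices. If F is a set of vertex pairs with |F| ≤ k such that G△F is a cluster graph, then F contains no pair with an endpoint in V(H); in particular, H is a connected component of G△F. -/
import Mathlib


open SimpleGraph

/-- A graph is a cluster graph if every connected component is a clique
(equivalently, it has no induced `P₃`). -/
def IsClusterGraph {V : Type*} (G : SimpleGraph V) : Prop :=
  ∀ ⦃u v w : V⦄, G.Adj u v → G.Adj v w → u ≠ w → G.Adj u w

/-- `G △ F`: the graph with vertex set `V` and edge set the symmetric
difference of `E(G)` and `F`. -/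
def editGraph {V : Type*} (G : SimpleGraph V) (F : Set (Sym2 V)) : SimpleGraph V :=
  SimpleGraph.fromEdgeSet (symmDiff G.edgeSet F)

/-- The set `{u, v, w}` induces a path on three vertices in `G` (with `{u,v}`
being one of the pairs of the triple). -/
def IsInducedP3With {V : Type*} (G : SimpleGraph V) (u v w : V) : Prop :=
  u ≠ v ∧ u ≠ w ∧ v ≠ w ∧
    ((G.Adj u v ∧ G.Adj v w ∧ ¬ G.Adj u w) ∨
     (G.Adj u v ∧ G.Adj u w ∧ ¬ G.Adj v w) ∨
     (G.Adj u w ∧ G.Adj v w ∧ ¬ G.Adj u v))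

lemma cluster_adj_of_reachable {V : Type*} {G : SimpleGraph V} (hG : IsClusterGraph G)
    {u v : V} (hr : G.Reachable u v) : u ≠ v → G.Adj u v := by
  obtain ⟨w⟩ := hr
  induction w with
  | nil => exact fun h => absurd rfl h
  | @cons a b c hab p ih =>
      intro hac
      by_cases hbc : b = c
      · exact hbc ▸ hab
      · exact hG hab (ih hbc) hac

theorem big_clique_component_untouched_by_editing {V : Type*} [Fintype V]
    (G : SimpleGraph V) (k : ℕ) (H : G.ConnectedComponent)
    (hclique : G.IsClique H.supp) (hbig : k + 2 ≤ H.supp.ncard)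
    (F : Set (Sym2 V)) (hF : ∀ e ∈ F, ¬ e.IsDiag) (hcard : F.ncard ≤ k)
    (hedit : IsClusterGraph (editGraph G F)) :
    (∀ e ∈ F, ∀ v ∈ e, v ∉ H.supp) ∧
    (∃ c : (editGraph G F).ConnectedComponent, c.supp = H.supp) := by
  classical
  have hHne : H.supp.Nonempty := by
    rw [← Set.ncard_pos]; omega
  obtain ⟨u₀, hu₀⟩ := hHne
  set G' := editGraph G F with hG'
  have hadj : ∀ a b : V, G'.Adj a b ↔ s(a,b) ∈ symmDiff G.edgeSet F ∧ a ≠ b := by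
    intro a b; exact SimpleGraph.fromEdgeSet_adj _
  set c := G'.connectedComponentMk u₀ with hc
  -- adjacency in G implies same G-component
  have hsameG : ∀ a b : V, G.Adj a b → a ∈ H.supp → b ∈ H.supp := by
    intro a b hab ha
    rw [SimpleGraph.ConnectedComponent.mem_supp_iff] at ha ⊢
    rw [← ha]
    exact (SimpleGraph.ConnectedComponent.sound hab.symm.reachable)
  -- Step 1
  have hsub : H.supp ⊆ c.supp := by
    by_contra hcon
    rw [Set.not_subset] at hcon
    obtain ⟨v, hvH, hvc⟩ := hcon
    set S := H.supp ∩ c.supp with hS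
    set T := H.supp \ c.supp with hT
    have hu₀S : u₀ ∈ S := ⟨hu₀, rfl⟩
    have hvT : v ∈ T := ⟨hvH, hvc⟩
    have hST : ∀ p : V × V, p ∈ S ×ˢ T → s(p.1, p.2) ∈ F := by
      rintro ⟨a, b⟩ ⟨⟨haH, hac⟩, hbH, hbc⟩
      have hne : a ≠ b := by rintro rfl; exact hbc hac
      have hGadj : G.Adj a b := hclique haH hbH hne
      have hnG' : ¬ G'.Adj a b := by
        intro h
        apply hbc
        rw [SimpleGraph.ConnectedComponent.mem_supp_iff] at hac ⊢
        rw [← hac]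
        exact (SimpleGraph.ConnectedComponent.sound h.symm.reachable)
      rw [hadj] at hnG'
      have : s(a,b) ∉ symmDiff G.edgeSet F := fun h => hnG' ⟨h, hne⟩
      rw [Set.mem_symmDiff] at this
      push_neg at this
      exact this.1 hGadj
    have hinj : Set.InjOn (fun p : V × V => s(p.1, p.2)) (S ×ˢ T) := by
      rintro ⟨a, b⟩ ⟨⟨_, hac⟩, _, _⟩ ⟨a', b'⟩ ⟨⟨_, _⟩, _, hb'c⟩ h
      simp only [Sym2.eq, Sym2.rel_iff', Prod.mk.injEq, Prod.swap_prod_mk] at h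
      rcases h with ⟨rfl, rfl⟩ | ⟨rfl, rfl⟩
      · rfl
      · exact absurd hac hb'c
    have h1 : (S ×ˢ T).ncard ≤ F.ncard := by
      rw [← Set.ncard_image_of_injOn hinj]
      exact Set.ncard_le_ncard (Set.image_subset_iff.mpr hST) (Set.toFinite F)
    have hprod : (S ×ˢ T).ncard = S.ncard * T.ncard := by
      rw [← Nat.card_coe_set_eq, ← Nat.card_coe_set_eq, ← Nat.card_coe_set_eq,
        Nat.card_congr (Equiv.Set.prod S T), Nat.card_prod]
    have hpart : S.ncard + T.ncard = H.supp.ncard :=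
      Set.ncard_inter_add_ncard_diff_eq_ncard H.supp c.supp
    have hSpos : 1 ≤ S.ncard := (Set.ncard_pos (Set.toFinite _)).2 ⟨u₀, hu₀S⟩
    have hTpos : 1 ≤ T.ncard := (Set.ncard_pos (Set.toFinite _)).2 ⟨v, hvT⟩
    obtain ⟨s', hs'⟩ := Nat.exists_eq_add_of_le hSpos
    obtain ⟨t', ht'⟩ := Nat.exists_eq_add_of_le hTpos
    have : (1 + s') * (1 + t') = s' * t' + s' + t' + 1 := by ring
    rw [hprod, hs', ht'] at h1
    omega
  -- reachability within c
  have hreach : ∀ a ∈ c.supp, ∀ b ∈ c.supp, G'.Reachable a b := by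
    intro a ha b hb
    rw [SimpleGraph.ConnectedComponent.mem_supp_iff] at ha hb
    exact (SimpleGraph.ConnectedComponent.exact (ha.trans hb.symm))
  -- Step 2
  have hsup : c.supp ⊆ H.supp := by
    intro x hx
    by_contra hxH
    have hmap : ∀ h ∈ H.supp, s(x, h) ∈ F := by
      intro h hh
      have hxh : x ≠ h := fun e => hxH (e ▸ hh)
      have hadj' : G'.Adj x h :=
        cluster_adj_of_reachable hedit (hreach x hx h (hsub hh)) hxh
      rw [hadj] at hadj'
      have hnG : s(x, h) ∉ G.edgeSet := by
        intro hG
        exact hxH (hsameG h x (G.mem_edgeSet.mp hG).symm hh)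
      rcases (Set.mem_symmDiff.mp hadj'.1) with ⟨h1, _⟩ | ⟨h1, _⟩
      · exact absurd h1 hnG
      · exact h1
    have hinj2 : Set.InjOn (fun h : V => s(x, h)) H.supp := by
      intro a ha b hb hab
      simp only [Sym2.eq, Sym2.rel_iff', Prod.mk.injEq, Prod.swap_prod_mk] at hab
      rcases hab with ⟨_, rfl⟩ | ⟨rfl, rfl⟩
      · rfl
      · exact absurd hb hxH
    have : H.supp.ncard ≤ F.ncard := by
      rw [← Set.ncard_image_of_injOn hinj2]
      exact Set.ncard_le_ncard (Set.image_subset_iff.mpr hmap) (Set.toFinite F)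
    omega
  have hceq : c.supp = H.supp := Set.Subset.antisymm hsup hsub
  refine ⟨?_, ⟨c, hceq⟩⟩
  intro e he v hv hvH
  obtain ⟨w, rfl⟩ := Sym2.mem_iff_exists.mp hv
  have hvw : v ≠ w := by
    intro h; exact hF _ he (h ▸ Sym2.mk_isDiag_iff.mpr rfl)
  by_cases hwH : w ∈ H.supp
  · have hGadj : G.Adj v w := hclique hvH hwH hvw
    have hadj' : G'.Adj v w :=
      cluster_adj_of_reachable hedit (hreach v (hsub hvH) w (hsub hwH)) hvw
    rw [hadj] at hadj'
    rcases Set.mem_symmDiff.mp hadj'.1 with ⟨_, h2⟩ | ⟨_, h2⟩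
    · exact h2 he
    · exact h2 hGadj
  · have hnG : s(v, w) ∉ G.edgeSet := by
      intro hG
      exact hwH (hsameG v w (G.mem_edgeSet.mp hG) hvH)
    have hadj' : G'.Adj v w := by
      rw [hadj]
      exact ⟨Set.mem_symmDiff.mpr (Or.inr ⟨he, hnG⟩), hvw⟩
    have hwc : w ∈ c.supp := by
      have hvc : v ∈ c.supp := hsub hvH
      rw [SimpleGraph.ConnectedComponent.mem_supp_iff] at hvc ⊢
      rw [← hvc]
      exact SimpleGraph.ConnectedComponent.sound hadj'.symm.reachable
    exact hwH (hceq ▸ hwc)
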